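/- arXiv:1810.08084 — 6 statements merged into one kernel-verified Lean document; each statement's English description precedes it below -/
import Mathlib

section
/- There exists exactly one affine function $S:\mathbb{R}^3\to\mathbb{R}$ such that $\sum_{p=1}^{6}|F_p|\,S(M_p)\,\psi(M_p)=\sum_{p=1}^{6}|F_p|\,v_{bp}\,\psi(M_p)$ holds for every affine function $\psi:\mathbb{R}^3\to\mathbb{R}$, and this function is $S(x,y,z)=c_1+c_2(x-x_c)+c_3(y-y_c)+c_4(z-z_c)$ with $c_1=\frac{|F_1|(v_{b1}+v_{b2})+|F_3|(v_{b3}+v_{b4})+|F_5|(v_{b5}+v_{b6})}{2(|F_1|+|F_3|+|F_5|)}$, $c_2=\frac{v_{b2}-v_{b1}}{e_x}$, $c_3=\frac{v_{b4}-v_{b3}}{e_y}$, $c_4=\frac{v_{b6}-v_{b5}}{e_z}$. -/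
/-!
Write `rₚ = S(Mₚ) - v_{bp}` for the residual on face `p`. Testing against `ψ = 1` and against the
centred coordinates `x - x_c`, `y - y_c`, `z - z_c` shows that the face condition holds exactly
when `r` takes equal values on opposite faces and has vanishing `|F|`-weighted sum; conversely
these suffice because an affine `ψ` satisfies `ψ(M₁) + ψ(M₂) = 2 ψ(center)`, and likewise for
the other two pairs. For `S = a + b (x - x_c) + c (y - y_c) + d (z - z_c)` equality on the `x`-faces
reads `b e_x = v_{b2} - v_{b1}`, similarly for `c` and `d`, and the weighted sum pins `a = c₁`.
-/

/-- A function `f : ℝ³ → ℝ` is affine. -/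
def IsAffine (f : ℝ × ℝ × ℝ → ℝ) : Prop :=
  ∃ a b c d : ℝ, ∀ p : ℝ × ℝ × ℝ, f p = a + b * p.1 + c * p.2.1 + d * p.2.2

/-- The defining property of the extension `S`:
`∑ₚ |Fₚ| S(Mₚ) ψ(Mₚ) = ∑ₚ |Fₚ| v_{bp} ψ(Mₚ)` for every affine `ψ`. -/
def FaceSumProp (F1 F3 F5 : ℝ) (M1 M2 M3 M4 M5 M6 : ℝ × ℝ × ℝ)
    (vb1 vb2 vb3 vb4 vb5 vb6 : ℝ) (S : ℝ × ℝ × ℝ → ℝ) : Prop :=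
  ∀ ψ : ℝ × ℝ × ℝ → ℝ, IsAffine ψ →
    F1 * S M1 * ψ M1 + F1 * S M2 * ψ M2 + F3 * S M3 * ψ M3 + F3 * S M4 * ψ M4
      + F5 * S M5 * ψ M5 + F5 * S M6 * ψ M6
    = F1 * vb1 * ψ M1 + F1 * vb2 * ψ M2 + F3 * vb3 * ψ M3 + F3 * vb4 * ψ M4
      + F5 * vb5 * ψ M5 + F5 * vb6 * ψ M6

theorem isAffine_iff_centered (f : ℝ × ℝ × ℝ → ℝ) (q : ℝ × ℝ × ℝ) :
    IsAffine f ↔ ∃ a b c d : ℝ, ∀ p : ℝ × ℝ × ℝ,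
      f p = a + b * (p.1 - q.1) + c * (p.2.1 - q.2.1) + d * (p.2.2 - q.2.2) := by
  constructor
  · rintro ⟨a, b, c, d, hf⟩
    exact ⟨a + b * q.1 + c * q.2.1 + d * q.2.2, b, c, d, fun p => by rw [hf]; ring⟩
  · rintro ⟨a, b, c, d, hf⟩
    exact ⟨a - b * q.1 - c * q.2.1 - d * q.2.2, b, c, d, fun p => by rw [hf]; ring⟩

theorem faceSumProp_iff_residual {F1 F3 F5 : ℝ} {M1 M2 M3 M4 M5 M6 : ℝ × ℝ × ℝ}
    {vb1 vb2 vb3 vb4 vb5 vb6 : ℝ} {S : ℝ × ℝ × ℝ → ℝ} :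
    FaceSumProp F1 F3 F5 M1 M2 M3 M4 M5 M6 vb1 vb2 vb3 vb4 vb5 vb6 S ↔
      ∀ ψ : ℝ × ℝ × ℝ → ℝ, IsAffine ψ →
        F1 * (S M1 - vb1) * ψ M1 + F1 * (S M2 - vb2) * ψ M2 + F3 * (S M3 - vb3) * ψ M3
          + F3 * (S M4 - vb4) * ψ M4 + F5 * (S M5 - vb5) * ψ M5 + F5 * (S M6 - vb6) * ψ M6
        = 0 := by
  refine forall₂_congr fun ψ _ => ?_
  rw [← sub_eq_zero]
  ring_nf

section Box

variable {x0 x1 y0 y1 z0 z1 xc yc zc F1 F3 F5 : ℝ}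

theorem box_residual_orthogonal_iff (hxc : xc = (x0 + x1) / 2) (hyc : yc = (y0 + y1) / 2)
    (hzc : zc = (z0 + z1) / 2) (hx : x0 ≠ x1) (hy : y0 ≠ y1) (hz : z0 ≠ z1)
    (hF1 : F1 ≠ 0) (hF3 : F3 ≠ 0) (hF5 : F5 ≠ 0) (r1 r2 r3 r4 r5 r6 : ℝ) :
    (∀ ψ : ℝ × ℝ × ℝ → ℝ, IsAffine ψ →
        F1 * r1 * ψ (x0, yc, zc) + F1 * r2 * ψ (x1, yc, zc) + F3 * r3 * ψ (xc, y0, zc)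
          + F3 * r4 * ψ (xc, y1, zc) + F5 * r5 * ψ (xc, yc, z0) + F5 * r6 * ψ (xc, yc, z1)
        = 0) ↔
      F1 * (r1 + r2) + F3 * (r3 + r4) + F5 * (r5 + r6) = 0 ∧ r1 = r2 ∧ r3 = r4 ∧ r5 = r6 := by
  subst hxc hyc hzc
  constructor
  · intro h
    have hsum := h (fun _ => 1) ⟨1, 0, 0, 0, fun p => by ring⟩
    have hmx := h (fun p => p.1 - (x0 + x1) / 2) ⟨-((x0 + x1) / 2), 1, 0, 0, fun p => by ring⟩
    have hmy := h (fun p => p.2.1 - (y0 + y1) / 2) ⟨-((y0 + y1) / 2), 0, 1, 0, fun p => by ring⟩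
    have hmz := h (fun p => p.2.2 - (z0 + z1) / 2) ⟨-((z0 + z1) / 2), 0, 0, 1, fun p => by ring⟩
    simp only [sub_self, mul_zero, add_zero, zero_add] at hsum hmx hmy hmz
    have opposite_eq {F u v r r' : ℝ} (hF : F ≠ 0) (huv : u ≠ v)
        (h : F * (v - u) / 2 * (r' - r) = 0) : r = r' := by
      have : F * (v - u) / 2 ≠ 0 := by have := sub_ne_zero.2 huv.symm; positivity
      exact (sub_eq_zero.1 ((mul_eq_zero.1 h).resolve_left this)).symm
    exact ⟨by linear_combination hsum, opposite_eq hF1 hx (by linear_combination hmx),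
      opposite_eq hF3 hy (by linear_combination hmy),
      opposite_eq hF5 hz (by linear_combination hmz)⟩
  · rintro ⟨hsum, rfl, rfl, rfl⟩ ψ ⟨a, b, c, d, hψ⟩
    simp only [hψ]
    linear_combination
      (a + b * ((x0 + x1) / 2) + c * ((y0 + y1) / 2) + d * ((z0 + z1) / 2)) * hsum

theorem sub_mul_half_eq_add_mul_half_iff {a b v1 v2 e : ℝ} (he : e ≠ 0) :
    a - b * (e / 2) - v1 = a + b * (e / 2) - v2 ↔ b = (v2 - v1) / e := by
  rw [eq_div_iff he]
  constructor <;> intro h <;> linarith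

theorem faceSumProp_iff_of_centered (hxc : xc = (x0 + x1) / 2) (hyc : yc = (y0 + y1) / 2)
    (hzc : zc = (z0 + z1) / 2) (hx : x0 < x1) (hy : y0 < y1) (hz : z0 < z1)
    (hF1 : 0 < F1) (hF3 : 0 < F3) (hF5 : 0 < F5) ⦃vb1 vb2 vb3 vb4 vb5 vb6 a b c d : ℝ⦄
    ⦃S : ℝ × ℝ × ℝ → ℝ⦄
    (hS : ∀ p : ℝ × ℝ × ℝ, S p = a + b * (p.1 - xc) + c * (p.2.1 - yc) + d * (p.2.2 - zc)) :
    FaceSumProp F1 F3 F5 (x0, yc, zc) (x1, yc, zc) (xc, y0, zc) (xc, y1, zc) (xc, yc, z0)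
        (xc, yc, z1) vb1 vb2 vb3 vb4 vb5 vb6 S ↔
      a = (F1 * (vb1 + vb2) + F3 * (vb3 + vb4) + F5 * (vb5 + vb6)) / (2 * (F1 + F3 + F5)) ∧
        b = (vb2 - vb1) / (x1 - x0) ∧ c = (vb4 - vb3) / (y1 - y0) ∧
        d = (vb6 - vb5) / (z1 - z0) := by
  rw [faceSumProp_iff_residual, box_residual_orthogonal_iff hxc hyc hzc hx.ne hy.ne hz.ne
    hF1.ne' hF3.ne' hF5.ne']
  have hS1 : S (x0, yc, zc) = a - b * ((x1 - x0) / 2) := by rw [hS, hxc]; ring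
  have hS2 : S (x1, yc, zc) = a + b * ((x1 - x0) / 2) := by rw [hS, hxc]; ring
  have hS3 : S (xc, y0, zc) = a - c * ((y1 - y0) / 2) := by rw [hS, hyc]; ring
  have hS4 : S (xc, y1, zc) = a + c * ((y1 - y0) / 2) := by rw [hS, hyc]; ring
  have hS5 : S (xc, yc, z0) = a - d * ((z1 - z0) / 2) := by rw [hS, hzc]; ring
  have hS6 : S (xc, yc, z1) = a + d * ((z1 - z0) / 2) := by rw [hS, hzc]; ring
  rw [hS1, hS2, hS3, hS4, hS5, hS6]
  refine and_congr ?_ <| and_congr (sub_mul_half_eq_add_mul_half_iff (sub_pos.2 hx).ne') <|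
    and_congr (sub_mul_half_eq_add_mul_half_iff (sub_pos.2 hy).ne')
      (sub_mul_half_eq_add_mul_half_iff (sub_pos.2 hz).ne')
  rw [eq_div_iff (by positivity)]
  constructor <;> intro h <;> linarith

end Box

theorem stmt0 (x0 x1 y0 y1 z0 z1 : ℝ) (hx : x0 < x1) (hy : y0 < y1) (hz : z0 < z1)
    (ex ey ez xc yc zc F1 F3 F5 : ℝ)
    (hex : ex = x1 - x0) (hey : ey = y1 - y0) (hez : ez = z1 - z0)
    (hxc : xc = (x0 + x1) / 2) (hyc : yc = (y0 + y1) / 2) (hzc : zc = (z0 + z1) / 2)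
    (hF1 : F1 = ey * ez) (hF3 : F3 = ex * ez) (hF5 : F5 = ex * ey)
    (M1 M2 M3 M4 M5 M6 : ℝ × ℝ × ℝ)
    (hM1 : M1 = (x0, yc, zc)) (hM2 : M2 = (x1, yc, zc))
    (hM3 : M3 = (xc, y0, zc)) (hM4 : M4 = (xc, y1, zc))
    (hM5 : M5 = (xc, yc, z0)) (hM6 : M6 = (xc, yc, z1))
    (vb1 vb2 vb3 vb4 vb5 vb6 : ℝ) (c1 c2 c3 c4 : ℝ)
    (hc1 : c1 = (F1 * (vb1 + vb2) + F3 * (vb3 + vb4) + F5 * (vb5 + vb6)) / (2 * (F1 + F3 + F5)))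
    (hc2 : c2 = (vb2 - vb1) / ex) (hc3 : c3 = (vb4 - vb3) / ey) (hc4 : c4 = (vb6 - vb5) / ez)
    (Sfun : ℝ × ℝ × ℝ → ℝ)
    (hS : ∀ p : ℝ × ℝ × ℝ, Sfun p = c1 + c2 * (p.1 - xc) + c3 * (p.2.1 - yc) + c4 * (p.2.2 - zc)) :
    (IsAffine Sfun ∧ FaceSumProp F1 F3 F5 M1 M2 M3 M4 M5 M6 vb1 vb2 vb3 vb4 vb5 vb6 Sfun) ∧
    (∀ S : ℝ × ℝ × ℝ → ℝ, IsAffine S →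
      FaceSumProp F1 F3 F5 M1 M2 M3 M4 M5 M6 vb1 vb2 vb3 vb4 vb5 vb6 S → S = Sfun) := by
  subst hex hey hez hM1 hM2 hM3 hM4 hM5 hM6
  have hF1pos : 0 < F1 := hF1 ▸ mul_pos (sub_pos.2 hy) (sub_pos.2 hz)
  have hF3pos : 0 < F3 := hF3 ▸ mul_pos (sub_pos.2 hx) (sub_pos.2 hz)
  have hF5pos : 0 < F5 := hF5 ▸ mul_pos (sub_pos.2 hx) (sub_pos.2 hy)
  have hchar := faceSumProp_iff_of_centered hxc hyc hzc hx hy hz hF1pos hF3pos hF5pos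
  refine ⟨⟨(isAffine_iff_centered _ (xc, yc, zc)).2 ⟨c1, c2, c3, c4, hS⟩,
    (hchar hS).2 ⟨hc1, hc2, hc3, hc4⟩⟩, fun S hSaff hSface => ?_⟩
  obtain ⟨a, b, c, d, hSc⟩ := (isAffine_iff_centered S (xc, yc, zc)).1 hSaff
  obtain ⟨rfl, rfl, rfl, rfl⟩ := (hchar hSc).1 hSface
  funext p
  rw [hSc, hS, hc1, hc2, hc3, hc4]
end

section
/- For every constant vector $\bar q=(\bar q_1,\bar q_2,\bar q_3)\in\mathbb{R}^3$, $\sum_{p=1}^{6}(\bar q\cdot n_p)\int_{F_p}\big(\mathcal{S}(v_b)-v_{bp}\big)\,dS=0$, where each face integral is taken with respect to two-dimensional Lebesgue measure on the face. -/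
/-! Along each axis the slope of `S` is chosen so that `S - v_b` takes the same values at
corresponding points of the two opposite faces. Those faces carry opposite normals, so their
contributions cancel pairwise, without computing any integral. -/

lemma slope_mul_sub_sub_eq {a b : ℝ} (hab : a < b) (v w r : ℝ) :
    (w - v) / (b - a) * (b - r) - w = (w - v) / (b - a) * (a - r) - v := by
  have hba : b - a ≠ 0 := sub_ne_zero.mpr hab.ne'
  linear_combination div_mul_cancel₀ (w - v) hba

theorem stmt5_general (x0 x1 y0 y1 z0 z1 : ℝ) (hx : x0 < x1) (hy : y0 < y1) (hz : z0 < z1)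
    (ex ey ez xc yc zc : ℝ)
    (hex : ex = x1 - x0) (hey : ey = y1 - y0) (hez : ez = z1 - z0)
    (vb1 vb2 vb3 vb4 vb5 vb6 : ℝ) (c1 c2 c3 c4 : ℝ)
    (hc2 : c2 = (vb2 - vb1) / ex) (hc3 : c3 = (vb4 - vb3) / ey) (hc4 : c4 = (vb6 - vb5) / ez)
    (S : ℝ → ℝ → ℝ → ℝ)
    (hS : ∀ x y z : ℝ, S x y z = c1 + c2 * (x - xc) + c3 * (y - yc) + c4 * (z - zc))
    (qb1 qb2 qb3 : ℝ) :
    (-qb1) * (∫ y in y0..y1, ∫ z in z0..z1, (S x0 y z - vb1))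
      + qb1 * (∫ y in y0..y1, ∫ z in z0..z1, (S x1 y z - vb2))
      + (-qb2) * (∫ x in x0..x1, ∫ z in z0..z1, (S x y0 z - vb3))
      + qb2 * (∫ x in x0..x1, ∫ z in z0..z1, (S x y1 z - vb4))
      + (-qb3) * (∫ x in x0..x1, ∫ y in y0..y1, (S x y z0 - vb5))
      + qb3 * (∫ x in x0..x1, ∫ y in y0..y1, (S x y z1 - vb6)) = 0 := by
  subst hex hey hez hc2 hc3 hc4
  have faces_x : ∀ y z, S x1 y z - vb2 = S x0 y z - vb1 := fun y z => by
    rw [hS, hS]; linear_combination slope_mul_sub_sub_eq hx vb1 vb2 xc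
  have faces_y : ∀ x z, S x y1 z - vb4 = S x y0 z - vb3 := fun x z => by
    rw [hS, hS]; linear_combination slope_mul_sub_sub_eq hy vb3 vb4 yc
  have faces_z : ∀ x y, S x y z1 - vb6 = S x y z0 - vb5 := fun x y => by
    rw [hS, hS]; linear_combination slope_mul_sub_sub_eq hz vb5 vb6 zc
  simp only [faces_x, faces_y, faces_z]
  ring

theorem stmt5 (x0 x1 y0 y1 z0 z1 : ℝ) (hx : x0 < x1) (hy : y0 < y1) (hz : z0 < z1)
    (ex ey ez xc yc zc F1 F3 F5 : ℝ)
    (hex : ex = x1 - x0) (hey : ey = y1 - y0) (hez : ez = z1 - z0)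
    (hxc : xc = (x0 + x1) / 2) (hyc : yc = (y0 + y1) / 2) (hzc : zc = (z0 + z1) / 2)
    (hF1 : F1 = ey * ez) (hF3 : F3 = ex * ez) (hF5 : F5 = ex * ey)
    (vb1 vb2 vb3 vb4 vb5 vb6 : ℝ) (c1 c2 c3 c4 : ℝ)
    (hc1 : c1 = (F1 * (vb1 + vb2) + F3 * (vb3 + vb4) + F5 * (vb5 + vb6)) / (2 * (F1 + F3 + F5)))
    (hc2 : c2 = (vb2 - vb1) / ex) (hc3 : c3 = (vb4 - vb3) / ey) (hc4 : c4 = (vb6 - vb5) / ez)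
    (S : ℝ → ℝ → ℝ → ℝ)
    (hS : ∀ x y z : ℝ, S x y z = c1 + c2 * (x - xc) + c3 * (y - yc) + c4 * (z - zc))
    (qb1 qb2 qb3 : ℝ) :
    (-qb1) * (∫ y in y0..y1, ∫ z in z0..z1, (S x0 y z - vb1))
      + qb1 * (∫ y in y0..y1, ∫ z in z0..z1, (S x1 y z - vb2))
      + (-qb2) * (∫ x in x0..x1, ∫ z in z0..z1, (S x y0 z - vb3))
      + qb2 * (∫ x in x0..x1, ∫ z in z0..z1, (S x y1 z - vb4))
      + (-qb3) * (∫ x in x0..x1, ∫ y in y0..y1, (S x y z0 - vb5))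
      + qb3 * (∫ x in x0..x1, ∫ y in y0..y1, (S x y z1 - vb6)) = 0 :=
  stmt5_general x0 x1 y0 y1 z0 z1 hx hy hz ex ey ez xc yc zc hex hey hez vb1 vb2 vb3 vb4 vb5 vb6 c1
    c2 c3 c4 hc2 hc3 hc4 S hS qb1 qb2 qb3
end

section
/- Let $q=(q_1,q_2,q_3)$ be a continuously differentiable vector field on a neighborhood of $T$. Then $\sum_{p=1}^{6}\int_{F_p}(q\cdot n_p)\big(\mathcal{S}(v_b)-v_{bp}\big)\,dS=\int_T\Big(\partial_x q_1\,\chi_1+\partial_y q_2\,\chi_2+\partial_z q_3\,\chi_3\Big)\,dV$, where face integrals are with respect to two-dimensional Lebesgue measure on the face and the volume integral is with respect to Lebesgue measure on $\mathbb{R}^3$. -/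
/-!
Since `c₂ eₓ = v_{b2} - v_{b1}`, the weights `S - v_{b1}` on `F₁` and `S - v_{b2}` on `F₂` agree at
opposite points and both equal `χ₁`, which does not depend on `x`; likewise for the other two pairs
of faces. A pair of opposite faces thus contributes `∫∫ (q₁(x₁, ·) - q₁(x₀, ·)) χ₁`, which is
`∫_T ∂ₓq₁ χ₁` by the fundamental theorem of calculus once Fubini puts the `x`-integral innermost.
-/

open MeasureTheory Set

section Fubini

variable {β E : Type*} [MeasureSpace β] [SFinite (volume : Measure β)] [NormedAddCommGroup E]
  {a b c d e g : ℝ}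

theorem ContinuousOn.integrableOn_Icc_prod_Icc {f : ℝ × ℝ → E}
    (hf : ContinuousOn f (Icc a b ×ˢ Icc c d)) : IntegrableOn f (Icc a b ×ˢ Icc c d) :=
  hf.integrableOn_compact (isCompact_Icc.prod isCompact_Icc)

variable [NormedSpace ℝ E]

theorem intervalIntegral_eq_setIntegral_Icc (hab : a ≤ b) (f : ℝ → E) :
    ∫ x in a..b, f x = ∫ x in Icc a b, f x := by
  rw [intervalIntegral.integral_of_le hab, integral_Icc_eq_integral_Ioc]

theorem setIntegral_Icc_prod {t : Set β} {f : ℝ × β → E} (hab : a ≤ b)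
    (hf : IntegrableOn f (Icc a b ×ˢ t)) :
    ∫ p in Icc a b ×ˢ t, f p = ∫ x in a..b, ∫ w in t, f (x, w) := by
  rw [intervalIntegral_eq_setIntegral_Icc hab]
  exact setIntegral_prod f hf

theorem setIntegral_Icc_prod_symm {t : Set β} {f : ℝ × β → E} (hab : a ≤ b)
    (hf : IntegrableOn f (Icc a b ×ˢ t)) :
    ∫ p in Icc a b ×ˢ t, f p = ∫ w in t, ∫ x in a..b, f (x, w) := by
  rw [Measure.volume_eq_prod, ← setIntegral_prod_swap,
    setIntegral_prod (fun z => f z.swap) hf.swap]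
  simp_rw [intervalIntegral_eq_setIntegral_Icc hab]
  rfl

theorem setIntegral_Icc_prod_Icc (hab : a ≤ b) (hcd : c ≤ d) {f : ℝ → ℝ → E}
    (hf : ContinuousOn (fun p : ℝ × ℝ => f p.1 p.2) (Icc a b ×ˢ Icc c d)) :
    ∫ p in Icc a b ×ˢ Icc c d, f p.1 p.2 = ∫ x in a..b, ∫ y in c..d, f x y := by
  simp_rw [setIntegral_Icc_prod hab hf.integrableOn_Icc_prod_Icc,
    intervalIntegral_eq_setIntegral_Icc hcd]

theorem setIntegral_Icc_prod_Icc_symm (hab : a ≤ b) (hcd : c ≤ d)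
    {f : ℝ → ℝ → E} (hf : ContinuousOn (fun p : ℝ × ℝ => f p.1 p.2) (Icc a b ×ˢ Icc c d)) :
    ∫ p in Icc a b ×ˢ Icc c d, f p.1 p.2 = ∫ y in c..d, ∫ x in a..b, f x y := by
  rw [setIntegral_Icc_prod_symm hab hf.integrableOn_Icc_prod_Icc,
    intervalIntegral_eq_setIntegral_Icc hcd]

theorem setIntegral_Icc_prod_Icc_prod_Icc (hab : a ≤ b) (hcd : c ≤ d)
    (heg : e ≤ g) {f : ℝ → ℝ → ℝ → E}
    (hf : ContinuousOn (fun p : ℝ × ℝ × ℝ => f p.1 p.2.1 p.2.2)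
      (Icc a b ×ˢ Icc c d ×ˢ Icc e g)) :
    ∫ p in Icc a b ×ˢ Icc c d ×ˢ Icc e g, f p.1 p.2.1 p.2.2
      = ∫ x in a..b, ∫ y in c..d, ∫ z in e..g, f x y z := by
  rw [setIntegral_Icc_prod hab
    (hf.integrableOn_compact (isCompact_Icc.prod (isCompact_Icc.prod isCompact_Icc)))]
  refine intervalIntegral.integral_congr fun x hx =>
    setIntegral_Icc_prod_Icc (f := f x) hcd heg ?_
  rw [uIcc_of_le hab] at hx
  exact hf.comp (Continuous.continuousOn (by fun_prop : Continuous fun w : ℝ × ℝ => (x, w)))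
    fun w hw => ⟨hx, hw⟩

theorem intervalIntegral_intervalIntegral_add (hab : a ≤ b) (hcd : c ≤ d)
    {f g : ℝ → ℝ → E} (hf : ContinuousOn (fun p : ℝ × ℝ => f p.1 p.2) (Icc a b ×ˢ Icc c d))
    (hg : ContinuousOn (fun p : ℝ × ℝ => g p.1 p.2) (Icc a b ×ˢ Icc c d)) :
    (∫ x in a..b, ∫ y in c..d, f x y) + (∫ x in a..b, ∫ y in c..d, g x y)
      = ∫ x in a..b, ∫ y in c..d, (f x y + g x y) := by
  rw [← setIntegral_Icc_prod_Icc hab hcd hf, ← setIntegral_Icc_prod_Icc hab hcd hg,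
    ← setIntegral_Icc_prod_Icc hab hcd (hf.add hg),
    integral_add hf.integrableOn_Icc_prod_Icc hg.integrableOn_Icc_prod_Icc]

theorem intervalIntegral_intervalIntegral_intervalIntegral_add (hab : a ≤ b)
    (hcd : c ≤ d) (heg : e ≤ g) {f₁ f₂ : ℝ → ℝ → ℝ → E}
    (hf₁ : ContinuousOn (fun p : ℝ × ℝ × ℝ => f₁ p.1 p.2.1 p.2.2)
      (Icc a b ×ˢ Icc c d ×ˢ Icc e g))
    (hf₂ : ContinuousOn (fun p : ℝ × ℝ × ℝ => f₂ p.1 p.2.1 p.2.2)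
      (Icc a b ×ˢ Icc c d ×ˢ Icc e g)) :
    ∫ x in a..b, ∫ y in c..d, ∫ z in e..g, (f₁ x y z + f₂ x y z)
      = (∫ x in a..b, ∫ y in c..d, ∫ z in e..g, f₁ x y z)
        + ∫ x in a..b, ∫ y in c..d, ∫ z in e..g, f₂ x y z := by
  have hK : IsCompact (Icc a b ×ˢ Icc c d ×ˢ Icc e g) :=
    isCompact_Icc.prod (isCompact_Icc.prod isCompact_Icc)
  rw [← setIntegral_Icc_prod_Icc_prod_Icc hab hcd heg hf₁,
    ← setIntegral_Icc_prod_Icc_prod_Icc hab hcd heg hf₂,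
    ← setIntegral_Icc_prod_Icc_prod_Icc hab hcd heg (hf₁.add hf₂),
    integral_add (hf₁.integrableOn_compact hK) (hf₂.integrableOn_compact hK)]

end Fubini

theorem intervalIntegral_deriv_mul_const {a b : ℝ} (hab : a ≤ b) {f : ℝ → ℝ}
    (hf : ∀ x ∈ Icc a b, DifferentiableAt ℝ f x) (hf' : ContinuousOn (deriv f) (Icc a b))
    (c : ℝ) : ∫ x in a..b, deriv f x * c = (f b - f a) * c := by
  rw [intervalIntegral.integral_mul_const, intervalIntegral.integral_deriv_eq_sub' f rfl
    (by rwa [uIcc_of_le hab]) (by rwa [uIcc_of_le hab])]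

section Faces

variable {x0 x1 y0 y1 z0 z1 : ℝ} {q : ℝ → ℝ → ℝ → ℝ} {χ : ℝ → ℝ → ℝ}

theorem integral_x_faces_eq_integral_deriv_mul (hx : x0 ≤ x1) (hy : y0 ≤ y1) (hz : z0 ≤ z1)
    (hq : ContinuousOn (fun p : ℝ × ℝ × ℝ => q p.1 p.2.1 p.2.2)
      (Icc x0 x1 ×ˢ Icc y0 y1 ×ˢ Icc z0 z1))
    (hdq : ∀ p ∈ Icc x0 x1 ×ˢ Icc y0 y1 ×ˢ Icc z0 z1,
      DifferentiableAt ℝ (fun t => q t p.2.1 p.2.2) p.1)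
    (hdq' : ContinuousOn (fun p : ℝ × ℝ × ℝ => deriv (fun t => q t p.2.1 p.2.2) p.1)
      (Icc x0 x1 ×ˢ Icc y0 y1 ×ˢ Icc z0 z1))
    (hχ : ContinuousOn (fun w : ℝ × ℝ => χ w.1 w.2) (Icc y0 y1 ×ˢ Icc z0 z1)) :
    (∫ y in y0..y1, ∫ z in z0..z1, -q x0 y z * χ y z)
      + (∫ y in y0..y1, ∫ z in z0..z1, q x1 y z * χ y z)
      = ∫ x in x0..x1, ∫ y in y0..y1, ∫ z in z0..z1, deriv (fun t => q t y z) x * χ y z := by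
  have face : ∀ x ∈ Icc x0 x1, ContinuousOn (fun w : ℝ × ℝ => q x w.1 w.2)
      (Icc y0 y1 ×ˢ Icc z0 z1) := fun x hx' =>
    hq.comp (Continuous.continuousOn (by fun_prop : Continuous fun w : ℝ × ℝ => (x, w)))
      fun w hw => ⟨hx', hw⟩
  have hcont : ContinuousOn
      (fun p : ℝ × ℝ × ℝ => deriv (fun t => q t p.2.1 p.2.2) p.1 * χ p.2.1 p.2.2)
      (Icc x0 x1 ×ˢ Icc y0 y1 ×ˢ Icc z0 z1) :=
    hdq'.mul (hχ.comp continuous_snd.continuousOn fun p hp => hp.2)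
  rw [intervalIntegral_intervalIntegral_add hy hz ((face x0 (left_mem_Icc.2 hx)).neg.mul hχ)
      ((face x1 (right_mem_Icc.2 hx)).mul hχ),
    ← setIntegral_Icc_prod_Icc hy hz
      (((face x0 (left_mem_Icc.2 hx)).neg.mul hχ).add ((face x1 (right_mem_Icc.2 hx)).mul hχ)),
    ← setIntegral_Icc_prod_Icc_prod_Icc hx hy hz hcont,
    setIntegral_Icc_prod_symm hx
      (hcont.integrableOn_compact (isCompact_Icc.prod (isCompact_Icc.prod isCompact_Icc)))]
  refine setIntegral_congr_fun (measurableSet_Icc.prod measurableSet_Icc) fun w hw => ?_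
  dsimp only
  rw [intervalIntegral_deriv_mul_const (f := fun t => q t w.1 w.2) hx
    (fun x hx' => hdq (x, w) ⟨hx', hw⟩)
    (hdq'.comp (Continuous.continuousOn (by fun_prop : Continuous fun x : ℝ => (x, w)))
      fun x hx' => ⟨hx', hw⟩)]
  ring

theorem integral_y_faces_eq_integral_deriv_mul (hx : x0 ≤ x1) (hy : y0 ≤ y1) (hz : z0 ≤ z1)
    (hq : ContinuousOn (fun p : ℝ × ℝ × ℝ => q p.1 p.2.1 p.2.2)
      (Icc x0 x1 ×ˢ Icc y0 y1 ×ˢ Icc z0 z1))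
    (hdq : ∀ p ∈ Icc x0 x1 ×ˢ Icc y0 y1 ×ˢ Icc z0 z1,
      DifferentiableAt ℝ (fun s => q p.1 s p.2.2) p.2.1)
    (hdq' : ContinuousOn (fun p : ℝ × ℝ × ℝ => deriv (fun s => q p.1 s p.2.2) p.2.1)
      (Icc x0 x1 ×ˢ Icc y0 y1 ×ˢ Icc z0 z1))
    (hχ : ContinuousOn (fun w : ℝ × ℝ => χ w.1 w.2) (Icc x0 x1 ×ˢ Icc z0 z1)) :
    (∫ x in x0..x1, ∫ z in z0..z1, -q x y0 z * χ x z)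
      + (∫ x in x0..x1, ∫ z in z0..z1, q x y1 z * χ x z)
      = ∫ x in x0..x1, ∫ y in y0..y1, ∫ z in z0..z1, deriv (fun s => q x s z) y * χ x z := by
  have face : ∀ y ∈ Icc y0 y1, ContinuousOn (fun w : ℝ × ℝ => q w.1 y w.2)
      (Icc x0 x1 ×ˢ Icc z0 z1) := fun y hy' =>
    hq.comp (Continuous.continuousOn (by fun_prop : Continuous fun w : ℝ × ℝ => (w.1, y, w.2)))
      fun w hw => ⟨hw.1, hy', hw.2⟩
  rw [intervalIntegral_intervalIntegral_add hx hz ((face y0 (left_mem_Icc.2 hy)).neg.mul hχ)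
      ((face y1 (right_mem_Icc.2 hy)).mul hχ)]
  refine intervalIntegral.integral_congr fun x hx' => ?_
  rw [uIcc_of_le hx] at hx'
  have slice : ContinuousOn (fun w : ℝ × ℝ => deriv (fun s => q x s w.2) w.1 * χ x w.2)
      (Icc y0 y1 ×ˢ Icc z0 z1) :=
    (hdq'.comp (Continuous.continuousOn (by fun_prop : Continuous fun w : ℝ × ℝ => (x, w)))
      fun w hw => ⟨hx', hw⟩).mul
    (hχ.comp (Continuous.continuousOn (by fun_prop : Continuous fun w : ℝ × ℝ => (x, w.2)))
      fun w hw => ⟨hx', hw.2⟩)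
  rw [← setIntegral_Icc_prod_Icc (f := fun y z => deriv (fun s => q x s z) y * χ x z)
      hy hz slice,
    setIntegral_Icc_prod_Icc_symm (f := fun y z => deriv (fun s => q x s z) y * χ x z)
      hy hz slice]
  refine intervalIntegral.integral_congr fun z hz' => ?_
  rw [uIcc_of_le hz] at hz'
  rw [intervalIntegral_deriv_mul_const (f := fun s => q x s z) hy
    (fun y hy' => hdq (x, y, z) ⟨hx', hy', hz'⟩)
    (hdq'.comp (Continuous.continuousOn (by fun_prop : Continuous fun y : ℝ => (x, y, z)))
      fun y hy' => ⟨hx', hy', hz'⟩)]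
  ring

theorem integral_z_faces_eq_integral_deriv_mul (hx : x0 ≤ x1) (hy : y0 ≤ y1) (hz : z0 ≤ z1)
    (hq : ContinuousOn (fun p : ℝ × ℝ × ℝ => q p.1 p.2.1 p.2.2)
      (Icc x0 x1 ×ˢ Icc y0 y1 ×ˢ Icc z0 z1))
    (hdq : ∀ p ∈ Icc x0 x1 ×ˢ Icc y0 y1 ×ˢ Icc z0 z1,
      DifferentiableAt ℝ (fun r => q p.1 p.2.1 r) p.2.2)
    (hdq' : ContinuousOn (fun p : ℝ × ℝ × ℝ => deriv (fun r => q p.1 p.2.1 r) p.2.2)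
      (Icc x0 x1 ×ˢ Icc y0 y1 ×ˢ Icc z0 z1))
    (hχ : ContinuousOn (fun w : ℝ × ℝ => χ w.1 w.2) (Icc x0 x1 ×ˢ Icc y0 y1)) :
    (∫ x in x0..x1, ∫ y in y0..y1, -q x y z0 * χ x y)
      + (∫ x in x0..x1, ∫ y in y0..y1, q x y z1 * χ x y)
      = ∫ x in x0..x1, ∫ y in y0..y1, ∫ z in z0..z1, deriv (fun r => q x y r) z * χ x y := by
  have face : ∀ z ∈ Icc z0 z1, ContinuousOn (fun w : ℝ × ℝ => q w.1 w.2 z)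
      (Icc x0 x1 ×ˢ Icc y0 y1) := fun z hz' =>
    hq.comp (Continuous.continuousOn (by fun_prop : Continuous fun w : ℝ × ℝ => (w.1, w.2, z)))
      fun w hw => ⟨hw.1, hw.2, hz'⟩
  rw [intervalIntegral_intervalIntegral_add hx hy ((face z0 (left_mem_Icc.2 hz)).neg.mul hχ)
      ((face z1 (right_mem_Icc.2 hz)).mul hχ)]
  refine intervalIntegral.integral_congr fun x hx' =>
    intervalIntegral.integral_congr fun y hy' => ?_
  rw [uIcc_of_le hx] at hx'
  rw [uIcc_of_le hy] at hy'
  rw [intervalIntegral_deriv_mul_const (f := fun r => q x y r) hz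
    (fun z hz' => hdq (x, y, z) ⟨hx', hy', hz'⟩)
    (hdq'.comp (Continuous.continuousOn (by fun_prop : Continuous fun z : ℝ => (x, y, z)))
      fun z hz' => ⟨hx', hy', hz'⟩)]
  ring

end Faces

section LineDerivative

variable {E X : Type*} [NormedAddCommGroup E] [NormedSpace ℝ E] [TopologicalSpace X]
  {U : Set E} {F : E → ℝ}

theorem ContDiffOn.differentiableAt_comp (hU : IsOpen U) (hF : ContDiffOn ℝ 1 F U)
    {γ : ℝ → E} {t : ℝ} (hγ : DifferentiableAt ℝ γ t) (ht : γ t ∈ U) :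
    DifferentiableAt ℝ (fun s => F (γ s)) t :=
  ((hF.differentiableOn one_ne_zero).differentiableAt (hU.mem_nhds ht)).comp t hγ

theorem ContDiffOn.continuousOn_deriv_comp (hU : IsOpen U) (hF : ContDiffOn ℝ 1 F U)
    {γ : X → ℝ → E} {τ : X → ℝ} {v : E} (hγ : ∀ p, HasDerivAt (γ p) v (τ p))
    (hγτ : Continuous fun p => γ p (τ p)) {K : Set X} (hK : MapsTo (fun p => γ p (τ p)) K U) :
    ContinuousOn (fun p => deriv (fun t => F (γ p t)) (τ p)) K := by
  refine (((hF.continuousOn_fderiv_of_isOpen hU le_rfl).comp hγτ.continuousOn hK).clm_apply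
    (continuousOn_const (c := v))).congr fun p hp => ?_
  exact (((hF.differentiableOn one_ne_zero).differentiableAt
    (hU.mem_nhds (hK hp))).hasFDerivAt.comp_hasDerivAt _ (hγ p)).deriv

end LineDerivative

theorem stmt6_general (x0 x1 y0 y1 z0 z1 : ℝ) (hx : x0 < x1) (hy : y0 < y1) (hz : z0 < z1)
    (ex ey ez xc yc zc : ℝ)
    (hex : ex = x1 - x0) (hey : ey = y1 - y0) (hez : ez = z1 - z0)
    (vb1 vb2 vb3 vb4 vb5 vb6 : ℝ) (c1 c2 c3 c4 : ℝ)
    (hc2 : c2 = (vb2 - vb1) / ex) (hc3 : c3 = (vb4 - vb3) / ey) (hc4 : c4 = (vb6 - vb5) / ez)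
    (S : ℝ → ℝ → ℝ → ℝ)
    (hS : ∀ x y z : ℝ, S x y z = c1 + c2 * (x - xc) + c3 * (y - yc) + c4 * (z - zc))
    -- `q = (q1, q2, q3)` is continuously differentiable on a neighborhood `U` of `T`
    (q1 q2 q3 : ℝ → ℝ → ℝ → ℝ) (U : Set (ℝ × ℝ × ℝ)) (hU : IsOpen U)
    (hTU : Set.Icc x0 x1 ×ˢ Set.Icc y0 y1 ×ˢ Set.Icc z0 z1 ⊆ U)
    (hq1 : ContDiffOn ℝ 1 (fun p : ℝ × ℝ × ℝ => q1 p.1 p.2.1 p.2.2) U)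
    (hq2 : ContDiffOn ℝ 1 (fun p : ℝ × ℝ × ℝ => q2 p.1 p.2.1 p.2.2) U)
    (hq3 : ContDiffOn ℝ 1 (fun p : ℝ × ℝ × ℝ => q3 p.1 p.2.1 p.2.2) U) :
    (∫ y in y0..y1, ∫ z in z0..z1, (-(q1 x0 y z)) * (S x0 y z - vb1))
      + (∫ y in y0..y1, ∫ z in z0..z1, q1 x1 y z * (S x1 y z - vb2))
      + (∫ x in x0..x1, ∫ z in z0..z1, (-(q2 x y0 z)) * (S x y0 z - vb3))
      + (∫ x in x0..x1, ∫ z in z0..z1, q2 x y1 z * (S x y1 z - vb4))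
      + (∫ x in x0..x1, ∫ y in y0..y1, (-(q3 x y z0)) * (S x y z0 - vb5))
      + (∫ x in x0..x1, ∫ y in y0..y1, q3 x y z1 * (S x y z1 - vb6))
    = ∫ x in x0..x1, ∫ y in y0..y1, ∫ z in z0..z1,
        (deriv (fun t => q1 t y z) x * (S x0 y z - vb1)
          + deriv (fun s => q2 x s z) y * (S x y0 z - vb3)
          + deriv (fun r => q3 x y r) z * (S x y z0 - vb5)) := by
  have jump_x : ∀ y z, S x1 y z - vb2 = S x0 y z - vb1 := fun y z => by
    rw [hS, hS, hc2, hex]; field_simp [sub_ne_zero.2 hx.ne']; ring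
  have jump_y : ∀ x z, S x y1 z - vb4 = S x y0 z - vb3 := fun x z => by
    rw [hS, hS, hc3, hey]; field_simp [sub_ne_zero.2 hy.ne']; ring
  have jump_z : ∀ x y, S x y z1 - vb6 = S x y z0 - vb5 := fun x y => by
    rw [hS, hS, hc4, hez]; field_simp [sub_ne_zero.2 hz.ne']; ring
  have hSc : Continuous fun p : ℝ × ℝ × ℝ => S p.1 p.2.1 p.2.2 := by
    simp only [hS]; fun_prop
  have line_x : ∀ p : ℝ × ℝ × ℝ, HasDerivAt (fun t : ℝ => (t, p.2.1, p.2.2)) (1, 0, 0) p.1 :=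
    fun p => (hasDerivAt_id _).prodMk ((hasDerivAt_const _ _).prodMk (hasDerivAt_const _ _))
  have line_y : ∀ p : ℝ × ℝ × ℝ, HasDerivAt (fun t : ℝ => (p.1, t, p.2.2)) (0, 1, 0) p.2.1 :=
    fun p => (hasDerivAt_const _ _).prodMk ((hasDerivAt_id _).prodMk (hasDerivAt_const _ _))
  have line_z : ∀ p : ℝ × ℝ × ℝ, HasDerivAt (fun t : ℝ => (p.1, p.2.1, t)) (0, 0, 1) p.2.2 :=
    fun p => (hasDerivAt_const _ _).prodMk ((hasDerivAt_const _ _).prodMk (hasDerivAt_id _))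
  have hdq1' := hq1.continuousOn_deriv_comp hU line_x (by fun_prop) hTU
  have hdq2' := hq2.continuousOn_deriv_comp hU line_y (by fun_prop) hTU
  have hdq3' := hq3.continuousOn_deriv_comp hU line_z (by fun_prop) hTU
  have flux1 := integral_x_faces_eq_integral_deriv_mul hx.le hy.le hz.le
    (hq1.continuousOn.mono hTU)
    (fun p hp => hq1.differentiableAt_comp hU (line_x p).differentiableAt (hTU hp)) hdq1'
    (χ := fun y z => S x0 y z - vb1) (by fun_prop)
  have flux2 := integral_y_faces_eq_integral_deriv_mul hx.le hy.le hz.le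
    (hq2.continuousOn.mono hTU)
    (fun p hp => hq2.differentiableAt_comp hU (line_y p).differentiableAt (hTU hp)) hdq2'
    (χ := fun x z => S x y0 z - vb3) (by fun_prop)
  have flux3 := integral_z_faces_eq_integral_deriv_mul hx.le hy.le hz.le
    (hq3.continuousOn.mono hTU)
    (fun p hp => hq3.differentiableAt_comp hU (line_z p).differentiableAt (hTU hp)) hdq3'
    (χ := fun x y => S x y z0 - vb5) (by fun_prop)
  have h1 := hdq1'.mul (g := fun p => S x0 p.2.1 p.2.2 - vb1) (by fun_prop)
  have h2 := hdq2'.mul (g := fun p => S p.1 y0 p.2.2 - vb3) (by fun_prop)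
  have h3 := hdq3'.mul (g := fun p => S p.1 p.2.1 z0 - vb5) (by fun_prop)
  rw [intervalIntegral_intervalIntegral_intervalIntegral_add hx.le hy.le hz.le (h1.add h2) h3,
    intervalIntegral_intervalIntegral_intervalIntegral_add hx.le hy.le hz.le h1 h2]
  simp only [jump_x, jump_y, jump_z]
  linarith [flux1, flux2, flux3]

theorem stmt6 (x0 x1 y0 y1 z0 z1 : ℝ) (hx : x0 < x1) (hy : y0 < y1) (hz : z0 < z1)
    (ex ey ez xc yc zc F1 F3 F5 : ℝ)
    (hex : ex = x1 - x0) (hey : ey = y1 - y0) (hez : ez = z1 - z0)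
    (hxc : xc = (x0 + x1) / 2) (hyc : yc = (y0 + y1) / 2) (hzc : zc = (z0 + z1) / 2)
    (hF1 : F1 = ey * ez) (hF3 : F3 = ex * ez) (hF5 : F5 = ex * ey)
    (vb1 vb2 vb3 vb4 vb5 vb6 : ℝ) (c1 c2 c3 c4 : ℝ)
    (hc1 : c1 = (F1 * (vb1 + vb2) + F3 * (vb3 + vb4) + F5 * (vb5 + vb6)) / (2 * (F1 + F3 + F5)))
    (hc2 : c2 = (vb2 - vb1) / ex) (hc3 : c3 = (vb4 - vb3) / ey) (hc4 : c4 = (vb6 - vb5) / ez)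
    (S : ℝ → ℝ → ℝ → ℝ)
    (hS : ∀ x y z : ℝ, S x y z = c1 + c2 * (x - xc) + c3 * (y - yc) + c4 * (z - zc))
    -- `q = (q1, q2, q3)` is continuously differentiable on a neighborhood `U` of `T`
    (q1 q2 q3 : ℝ → ℝ → ℝ → ℝ) (U : Set (ℝ × ℝ × ℝ)) (hU : IsOpen U)
    (hTU : Set.Icc x0 x1 ×ˢ Set.Icc y0 y1 ×ˢ Set.Icc z0 z1 ⊆ U)
    (hq1 : ContDiffOn ℝ 1 (fun p : ℝ × ℝ × ℝ => q1 p.1 p.2.1 p.2.2) U)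
    (hq2 : ContDiffOn ℝ 1 (fun p : ℝ × ℝ × ℝ => q2 p.1 p.2.1 p.2.2) U)
    (hq3 : ContDiffOn ℝ 1 (fun p : ℝ × ℝ × ℝ => q3 p.1 p.2.1 p.2.2) U) :
    (∫ y in y0..y1, ∫ z in z0..z1, (-(q1 x0 y z)) * (S x0 y z - vb1))
      + (∫ y in y0..y1, ∫ z in z0..z1, q1 x1 y z * (S x1 y z - vb2))
      + (∫ x in x0..x1, ∫ z in z0..z1, (-(q2 x y0 z)) * (S x y0 z - vb3))
      + (∫ x in x0..x1, ∫ z in z0..z1, q2 x y1 z * (S x y1 z - vb4))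
      + (∫ x in x0..x1, ∫ y in y0..y1, (-(q3 x y z0)) * (S x y z0 - vb5))
      + (∫ x in x0..x1, ∫ y in y0..y1, q3 x y z1 * (S x y z1 - vb6))
    = ∫ x in x0..x1, ∫ y in y0..y1, ∫ z in z0..z1,
        (deriv (fun t => q1 t y z) x * (S x0 y z - vb1)
          + deriv (fun s => q2 x s z) y * (S x y0 z - vb3)
          + deriv (fun r => q3 x y r) z * (S x y z0 - vb5)) :=
  stmt6_general x0 x1 y0 y1 z0 z1 hx hy hz ex ey ez xc yc zc hex hey hez vb1 vb2 vb3 vb4 vb5 vb6 c1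
    c2 c3 c4 hc2 hc3 hc4 S hS q1 q2 q3 U hU hTU hq1 hq2 hq3
end

section
/- Let $u$ be three times continuously differentiable on $[a,b]$, $h=b-a$, and define the cubic kernel $K(x)=\frac{h^2(x-a)}{6}-\frac{h(x-a)^2}{2}+\frac{(x-a)^3}{3}$. Then $K(a)=K(b)=0$, $|K(x)|\le\frac{h^3}{24}$ for all $x\in[a,b]$, and the Euler–MacLaurin-type identity $u(a)+u(b)=\frac{2}{h}\int_a^b u(x)\,dx+\frac{h}{6}\int_a^b u''(x)\,dx+\frac{1}{h}\int_a^b u'''(x)\,K(x)\,dx$ holds. -/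
/-!
Integrating `∫ u''' K` by parts three times moves all derivatives onto the kernel. Since
`K(a) = K(b) = 0`, `K'(a) = K'(b) = h² / 6`, `K''(a) = -h`, `K''(b) = h` and `K''' = 2`, what
remains is `h (u(a) + u(b)) - (h² / 6) (u'(b) - u'(a)) - 2 ∫ u`, and `u'(b) - u'(a) = ∫ u''`.
The bound on `K` comes from the factorisation `6 K = t (h - t) (h - 2t)` with `t = x - a`.
-/

open Set MeasureTheory

namespace intervalIntegral

variable {a b : ℝ}

theorem integral_eq_sub_of_hasDerivWithinAt_uIcc {f f' : ℝ → ℝ}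
    (hf : ∀ x ∈ uIcc a b, HasDerivWithinAt f (f' x) (uIcc a b) x)
    (hf' : IntervalIntegrable f' volume a b) :
    ∫ x in a..b, f' x = f b - f a :=
  integral_eq_sub_of_hasDeriv_right (HasDerivWithinAt.continuousOn hf)
    (fun x hx => ((hf x (mem_Icc_of_Ioo hx)).hasDerivAt (Icc_mem_nhds hx.1 hx.2)).hasDerivWithinAt)
    hf'

theorem integral_mul_third_deriv_eq {u u' u'' u''' k k' k'' k''' : ℝ → ℝ}
    (hu : ∀ x ∈ uIcc a b, HasDerivWithinAt u (u' x) (uIcc a b) x)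
    (hu' : ∀ x ∈ uIcc a b, HasDerivWithinAt u' (u'' x) (uIcc a b) x)
    (hu'' : ∀ x ∈ uIcc a b, HasDerivWithinAt u'' (u''' x) (uIcc a b) x)
    (hu''' : ContinuousOn u''' (uIcc a b))
    (hk : ∀ x ∈ uIcc a b, HasDerivWithinAt k (k' x) (uIcc a b) x)
    (hk' : ∀ x ∈ uIcc a b, HasDerivWithinAt k' (k'' x) (uIcc a b) x)
    (hk'' : ∀ x ∈ uIcc a b, HasDerivWithinAt k'' (k''' x) (uIcc a b) x)
    (hk''' : ContinuousOn k''' (uIcc a b)) :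
    ∫ x in a..b, k x * u''' x
      = (k b * u'' b - k a * u'' a) - (k' b * u' b - k' a * u' a)
        + (k'' b * u b - k'' a * u a) - ∫ x in a..b, k''' x * u x := by
  have parts₁ := integral_mul_deriv_eq_deriv_mul_of_hasDerivWithinAt hk hu''
    (HasDerivWithinAt.continuousOn hk').intervalIntegrable hu'''.intervalIntegrable
  have parts₂ := integral_mul_deriv_eq_deriv_mul_of_hasDerivWithinAt hk' hu'
    (HasDerivWithinAt.continuousOn hk'').intervalIntegrable
    (HasDerivWithinAt.continuousOn hu'').intervalIntegrable
  have parts₃ := integral_mul_deriv_eq_deriv_mul_of_hasDerivWithinAt hk'' hu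
    hk'''.intervalIntegrable (HasDerivWithinAt.continuousOn hu').intervalIntegrable
  rw [parts₁, parts₂, parts₃]
  ring

end intervalIntegral

theorem abs_mul_sub_mul_sub_two_mul_le {t h : ℝ} (ht₀ : 0 ≤ t) (hth : t ≤ h) :
    |t * (h - t) * (h - 2 * t)| ≤ h ^ 3 / 4 := by
  have hs : |h - 2 * t| ≤ h := abs_le.2 ⟨by linarith, by linarith⟩
  calc |t * (h - t) * (h - 2 * t)| = t * (h - t) * |h - 2 * t| := by
        rw [abs_mul, abs_of_nonneg (mul_nonneg ht₀ (sub_nonneg.2 hth))]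
    _ ≤ h ^ 2 / 4 * h := by
        gcongr
        nlinarith [sq_nonneg (h - 2 * t)]
    _ = h ^ 3 / 4 := by ring

namespace EulerMaclaurin

noncomputable def kernel (a h x : ℝ) : ℝ :=
  h ^ 2 * (x - a) / 6 - h * (x - a) ^ 2 / 2 + (x - a) ^ 3 / 3

variable {a h : ℝ}

theorem kernel_eq_mul (x : ℝ) :
    kernel a h x = (x - a) * (h - (x - a)) * (h - 2 * (x - a)) / 6 := by
  unfold kernel; ring

theorem kernel_left : kernel a h a = 0 := by
  simp [kernel_eq_mul]

theorem kernel_right : kernel a h (a + h) = 0 := by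
  simp [kernel_eq_mul]

theorem abs_kernel_le {x : ℝ} (hx : x ∈ Icc a (a + h)) : |kernel a h x| ≤ h ^ 3 / 24 := by
  have hbound := abs_mul_sub_mul_sub_two_mul_le (t := x - a) (h := h)
    (by linarith [hx.1]) (by linarith [hx.2])
  rw [kernel_eq_mul, abs_div, abs_of_pos (by norm_num : (0 : ℝ) < 6)]
  linarith

theorem hasDerivAt_kernel (a h x : ℝ) :
    HasDerivAt (kernel a h) (h ^ 2 / 6 - h * (x - a) + (x - a) ^ 2) x := by
  have hshift : HasDerivAt (fun y => y - a) 1 x := (hasDerivAt_id x).sub_const a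
  exact ((((hshift.const_mul (h ^ 2)).div_const 6).sub
    (((hshift.pow 2).const_mul h).div_const 2)).add ((hshift.pow 3).div_const 3)).congr_deriv
    (by push_cast; ring)

theorem hasDerivAt_deriv_kernel (a h x : ℝ) :
    HasDerivAt (fun y => h ^ 2 / 6 - h * (y - a) + (y - a) ^ 2) (2 * (x - a) - h) x := by
  have hshift : HasDerivAt (fun y => y - a) 1 x := (hasDerivAt_id x).sub_const a
  exact (((hasDerivAt_const x (h ^ 2 / 6)).sub (hshift.const_mul h)).add
    (hshift.pow 2)).congr_deriv (by push_cast; ring)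

theorem hasDerivAt_deriv_deriv_kernel (a h x : ℝ) :
    HasDerivAt (fun y => 2 * (y - a) - h) 2 x :=
  ((((hasDerivAt_id x).sub_const a).const_mul 2).sub_const h).congr_deriv (mul_one 2)

end EulerMaclaurin

open EulerMaclaurin in
theorem stmt12 (a b h : ℝ) (hab : a < b) (hh : h = b - a)
    -- `u` is three times continuously differentiable on `[a, b]`
    (u u' u'' u''' : ℝ → ℝ)
    (hu : ∀ x ∈ Set.Icc a b, HasDerivWithinAt u (u' x) (Set.Icc a b) x)
    (hu' : ∀ x ∈ Set.Icc a b, HasDerivWithinAt u' (u'' x) (Set.Icc a b) x)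
    (hu'' : ∀ x ∈ Set.Icc a b, HasDerivWithinAt u'' (u''' x) (Set.Icc a b) x)
    (hu''' : ContinuousOn u''' (Set.Icc a b))
    (K : ℝ → ℝ)
    (hK : ∀ x : ℝ, K x = h ^ 2 * (x - a) / 6 - h * (x - a) ^ 2 / 2 + (x - a) ^ 3 / 3) :
    K a = 0 ∧ K b = 0 ∧ (∀ x ∈ Set.Icc a b, |K x| ≤ h ^ 3 / 24) ∧
    u a + u b
      = 2 / h * (∫ x in a..b, u x) + h / 6 * (∫ x in a..b, u'' x)
        + 1 / h * (∫ x in a..b, u''' x * K x) := by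
  obtain rfl : b = a + h := by linarith
  obtain rfl : K = kernel a h := funext hK
  have hh₀ : h ≠ 0 := by linarith
  refine ⟨kernel_left, kernel_right, fun x hx => abs_kernel_le hx, ?_⟩
  rw [← uIcc_of_le hab.le] at hu hu' hu'' hu'''
  have parts := intervalIntegral.integral_mul_third_deriv_eq hu hu' hu'' hu'''
    (fun x _ => (hasDerivAt_kernel a h x).hasDerivWithinAt)
    (fun x _ => (hasDerivAt_deriv_kernel a h x).hasDerivWithinAt)
    (fun x _ => (hasDerivAt_deriv_deriv_kernel a h x).hasDerivWithinAt)
    (continuousOn_const (c := (2 : ℝ)))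
  have ftc := intervalIntegral.integral_eq_sub_of_hasDerivWithinAt_uIcc hu'
    (HasDerivWithinAt.continuousOn hu'').intervalIntegrable
  simp_rw [mul_comm (u''' _)]
  rw [parts, ftc, intervalIntegral.integral_const_mul, kernel_left, kernel_right]
  field_simp
  ring
end

section
/- Let $u$ be three times continuously differentiable on $[a,b]$ and $h=b-a$. Then $\left|u(a)+u(b)-\frac{2}{h}\int_a^b u(x)\,dx-\frac{h}{6}\int_a^b u''(x)\,dx\right|\le\frac{h^2}{24}\int_a^b|u'''(x)|\,dx$. -/
/-!
Peano kernel argument. The cubic `K t = (b - t)(t - a)(a + b - 2t) / (6h)` vanishes at `a` and `b`,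
has `K' = h/6` at both ends, `K'' = ∓1` at `a`, `b`, and `K''' = 2/h`. Integrating `K u'''` by parts
three times therefore gives exactly `u a + u b - (2/h) ∫ u - (h/6) ∫ u''`, and
`|K| ≤ (h²/4) · h / (6h) = h²/24` on `[a, b]`.
-/

open Set intervalIntegral MeasureTheory

section ThirdOrderParts

variable {a b : ℝ} {f f' : ℝ → ℝ}

theorem integral_eq_sub_of_hasDerivWithinAt_Icc (hab : a ≤ b)
    (hf : ∀ x ∈ Icc a b, HasDerivWithinAt f (f' x) (Icc a b) x)
    (hf' : IntervalIntegrable f' volume a b) :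
    ∫ x in a..b, f' x = f b - f a :=
  integral_eq_sub_of_hasDerivAt_of_le hab (fun x hx => (hf x hx).continuousWithinAt)
    (fun x hx => (hf x (Ioo_subset_Icc_self hx)).hasDerivAt (Icc_mem_nhds hx.1 hx.2)) hf'

theorem intervalIntegrable_of_hasDerivWithinAt_Icc (hab : a ≤ b)
    (hf : ∀ x ∈ Icc a b, HasDerivWithinAt f (f' x) (Icc a b) x) :
    IntervalIntegrable f volume a b :=
  ContinuousOn.intervalIntegrable_of_Icc hab fun x hx => (hf x hx).continuousWithinAt

theorem integral_mul_deriv3_add_deriv3_mul_eq {K K' K'' K''' u u' u'' u''' : ℝ → ℝ}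
    (hab : a ≤ b)
    (hK : ∀ x ∈ Icc a b, HasDerivWithinAt K (K' x) (Icc a b) x)
    (hK' : ∀ x ∈ Icc a b, HasDerivWithinAt K' (K'' x) (Icc a b) x)
    (hK'' : ∀ x ∈ Icc a b, HasDerivWithinAt K'' (K''' x) (Icc a b) x)
    (hu : ∀ x ∈ Icc a b, HasDerivWithinAt u (u' x) (Icc a b) x)
    (hu' : ∀ x ∈ Icc a b, HasDerivWithinAt u' (u'' x) (Icc a b) x)
    (hu'' : ∀ x ∈ Icc a b, HasDerivWithinAt u'' (u''' x) (Icc a b) x)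
    (hK''' : ContinuousOn K''' (Icc a b)) (hu''' : ContinuousOn u''' (Icc a b)) :
    ∫ x in a..b, (K x * u''' x + K''' x * u x)
      = (K b * u'' b - K' b * u' b + K'' b * u b) - (K a * u'' a - K' a * u' a + K'' a * u a) := by
  apply integral_eq_sub_of_hasDerivWithinAt_Icc hab
  · intro x hx
    exact ((((hK x hx).mul (hu'' x hx)).sub ((hK' x hx).mul (hu' x hx))).add
      ((hK'' x hx).mul (hu x hx))).congr_deriv (by ring)
  · have hKc : ContinuousOn K (Icc a b) := fun x hx => (hK x hx).continuousWithinAt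
    have huc : ContinuousOn u (Icc a b) := fun x hx => (hu x hx).continuousWithinAt
    exact ((hKc.mul hu''').add (hK'''.mul huc)).intervalIntegrable_of_Icc hab

end ThirdOrderParts

section TrapezoidKernel

variable (a b : ℝ)

noncomputable def trapezoidKernel (t : ℝ) : ℝ := (b - t) * (t - a) * (a + b - 2 * t) / (6 * (b - a))

theorem hasDerivAt_trapezoidKernel (t : ℝ) :
    HasDerivAt (trapezoidKernel a b)
      ((3 * (2 * t - a - b) ^ 2 - (b - a) ^ 2) / (12 * (b - a))) t := by
  have hP := ((((hasDerivAt_id t).const_sub b).mul ((hasDerivAt_id t).sub_const a)).mul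
    (((hasDerivAt_id t).const_mul 2).const_sub (a + b))).div_const (6 * (b - a))
  exact hP.congr_deriv (by simp only [id, Pi.mul_apply, ← div_div]; ring)

theorem hasDerivAt_trapezoidKernel_deriv (t : ℝ) :
    HasDerivAt (fun t => (3 * (2 * t - a - b) ^ 2 - (b - a) ^ 2) / (12 * (b - a)))
      ((2 * t - a - b) / (b - a)) t := by
  have hP := (((((hasDerivAt_id t).const_mul 2).sub_const a).sub_const b).pow 2 |>.const_mul 3
    |>.sub_const ((b - a) ^ 2)).div_const (12 * (b - a))
  exact hP.congr_deriv (by simp only [id, ← div_div]; ring)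

theorem hasDerivAt_trapezoidKernel_deriv2 (t : ℝ) :
    HasDerivAt (fun t => (2 * t - a - b) / (b - a)) (2 / (b - a)) t := by
  have hP := ((((hasDerivAt_id t).const_mul 2).sub_const a).sub_const b).div_const (b - a)
  exact hP.congr_deriv (by ring)

variable {a b}

theorem abs_trapezoidKernel_le (hab : a < b) {t : ℝ} (ht : t ∈ Icc a b) :
    |trapezoidKernel a b t| ≤ (b - a) ^ 2 / 24 := by
  obtain ⟨hat, htb⟩ := ht
  have hh : 0 < 6 * (b - a) := by linarith
  have hquad : (b - t) * (t - a) ≤ (b - a) ^ 2 / 4 := by nlinarith [sq_nonneg (a + b - 2 * t)]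
  have hlin : |a + b - 2 * t| ≤ b - a := abs_le.2 ⟨by linarith, by linarith⟩
  rw [trapezoidKernel, abs_div, abs_mul, abs_of_nonneg (by nlinarith : 0 ≤ (b - t) * (t - a)),
    abs_of_pos hh, div_le_iff₀ hh]
  calc (b - t) * (t - a) * |a + b - 2 * t| ≤ (b - a) ^ 2 / 4 * (b - a) :=
        mul_le_mul hquad hlin (abs_nonneg _) (by positivity)
    _ = (b - a) ^ 2 / 24 * (6 * (b - a)) := by ring

end TrapezoidKernel

theorem correctedTrapezoid_error_eq_integral_trapezoidKernel_mul {a b : ℝ} (hab : a < b)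
    {u u' u'' u''' : ℝ → ℝ}
    (hu : ∀ x ∈ Icc a b, HasDerivWithinAt u (u' x) (Icc a b) x)
    (hu' : ∀ x ∈ Icc a b, HasDerivWithinAt u' (u'' x) (Icc a b) x)
    (hu'' : ∀ x ∈ Icc a b, HasDerivWithinAt u'' (u''' x) (Icc a b) x)
    (hu''' : ContinuousOn u''' (Icc a b)) :
    u a + u b - 2 / (b - a) * (∫ x in a..b, u x) - (b - a) / 6 * (∫ x in a..b, u'' x)
      = ∫ x in a..b, trapezoidKernel a b x * u''' x := by
  have hKu'''_int : IntervalIntegrable (fun x => trapezoidKernel a b x * u''' x) volume a b :=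
    ((continuous_iff_continuousAt.2 fun t => (hasDerivAt_trapezoidKernel a b t).continuousAt)
      |>.continuousOn.mul hu''').intervalIntegrable_of_Icc hab.le
  have hparts := integral_mul_deriv3_add_deriv3_mul_eq hab.le
    (fun x _ => (hasDerivAt_trapezoidKernel a b x).hasDerivWithinAt)
    (fun x _ => (hasDerivAt_trapezoidKernel_deriv a b x).hasDerivWithinAt)
    (fun x _ => (hasDerivAt_trapezoidKernel_deriv2 a b x).hasDerivWithinAt)
    hu hu' hu'' continuousOn_const hu'''
  rw [integral_add hKu'''_int ((intervalIntegrable_of_hasDerivWithinAt_Icc hab.le hu).const_mul _),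
    intervalIntegral.integral_const_mul] at hparts
  rw [integral_eq_sub_of_hasDerivWithinAt_Icc hab.le hu'
    (intervalIntegrable_of_hasDerivWithinAt_Icc hab.le hu''), eq_sub_of_add_eq hparts]
  simp only [trapezoidKernel]
  have hba : b - a ≠ 0 := sub_ne_zero.2 hab.ne'
  field_simp
  ring

theorem stmt13 (a b h : ℝ) (hab : a < b) (hh : h = b - a)
    -- `u` is three times continuously differentiable on `[a, b]`
    (u u' u'' u''' : ℝ → ℝ)
    (hu : ∀ x ∈ Set.Icc a b, HasDerivWithinAt u (u' x) (Set.Icc a b) x)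
    (hu' : ∀ x ∈ Set.Icc a b, HasDerivWithinAt u' (u'' x) (Set.Icc a b) x)
    (hu'' : ∀ x ∈ Set.Icc a b, HasDerivWithinAt u'' (u''' x) (Set.Icc a b) x)
    (hu''' : ContinuousOn u''' (Set.Icc a b)) :
    |u a + u b - 2 / h * (∫ x in a..b, u x) - h / 6 * (∫ x in a..b, u'' x)|
      ≤ h ^ 2 / 24 * ∫ x in a..b, |u''' x| := by
  subst hh
  rw [correctedTrapezoid_error_eq_integral_trapezoidKernel_mul hab hu hu' hu'' hu''',
    ← intervalIntegral.integral_const_mul, ← Real.norm_eq_abs]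
  refine norm_integral_le_of_norm_le hab.le (Filter.Eventually.of_forall fun x hx => ?_)
    ((hu'''.abs.intervalIntegrable_of_Icc hab.le).const_mul _)
  rw [Real.norm_eq_abs, abs_mul]
  exact mul_le_mul_of_nonneg_right (abs_trapezoidKernel_le hab (Ioc_subset_Icc_self hx))
    (abs_nonneg _)
end

section
/- Let $f$ be continuously differentiable on a neighborhood of $T$. Then $\int_{F_3}f\,dS+\int_{F_4}f\,dS=\frac{2}{e_y}\left(\int_T f\,dV+\int_T \partial_y f\,(y-y_c)\,dV\right)$, and the analogous identities hold in the $x$-direction ($F_1,F_2$ with $e_x$ and $\partial_x f\,(x-x_c)$) and in the $z$-direction ($F_5,F_6$ with $e_z$ and $\partial_z f\,(z-z_c)$). -/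
/-!
Integrating by parts against `t - (a + b) / 2`, whose derivative is `1` and whose boundary values
are `∓ (b - a) / 2`, gives `g a + g b = 2 / (b - a) * (∫ g + ∫ g' * (t - (a + b) / 2))` on a
segment. Applying this along one coordinate and integrating over the other two gives each
identity, once the iterated integrals are put back in the order `x, y, z` by Fubini: all
integrands are continuous on the compact box.
-/

open MeasureTheory Set Function intervalIntegral

theorem add_eq_two_div_mul_integral_add_integral_deriv_mul {g g' : ℝ → ℝ} {a b : ℝ} (hab : a ≠ b)
    (hg : ∀ t ∈ uIcc a b, HasDerivAt g (g' t) t) (hg' : ContinuousOn g' (uIcc a b)) :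
    g a + g b = 2 / (b - a) * ((∫ t in a..b, g t) + ∫ t in a..b, g' t * (t - (a + b) / 2)) := by
  have hparts := integral_mul_deriv_eq_deriv_mul hg
    (fun t _ => ((hasDerivAt_id t).sub_const ((a + b) / 2)))
    (hg'.intervalIntegrable) intervalIntegrable_const
  simp only [mul_one, id] at hparts
  rw [hparts]
  field_simp [sub_ne_zero.mpr hab.symm]
  ring

theorem ContinuousOn.intervalIntegral_of_prod {X : Type*} [TopologicalSpace X] {h : X → ℝ → ℝ}
    {s : Set X} {c d : ℝ} (hh : ContinuousOn (uncurry h) (s ×ˢ uIcc c d)) :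
    ContinuousOn (fun x => ∫ y in c..d, h x y) s := by
  -- precomposing with the projection onto `[[c, d]]` makes the integrand continuous on `s × ℝ`
  let π : ℝ → ℝ := fun y => projIcc (c ⊓ d) (c ⊔ d) inf_le_sup y
  have hH : Continuous (uncurry fun (x : s) y => h x (π y)) :=
    hh.comp_continuous (f := fun q : s × ℝ => ((q.1 : X), π q.2)) (by fun_prop)
      fun q => ⟨q.1.2, Subtype.mem _⟩
  rw [continuousOn_iff_continuous_domRestrict]
  convert continuous_parametric_intervalIntegral_of_continuous' (μ := volume) hH c d using 2 with x
  exact integral_congr fun y hy => by simp [π, projIcc_of_mem _ hy]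

section IteratedIntegral

variable {a₁ b₁ a₂ b₂ a₃ b₃ : ℝ}

theorem integral_integral_add_of_continuousOn {A B : ℝ → ℝ → ℝ}
    (hA : ContinuousOn (uncurry A) (uIcc a₁ b₁ ×ˢ uIcc a₂ b₂))
    (hB : ContinuousOn (uncurry B) (uIcc a₁ b₁ ×ˢ uIcc a₂ b₂)) :
    ∫ x in a₁..b₁, ∫ y in a₂..b₂, (A x y + B x y)
      = (∫ x in a₁..b₁, ∫ y in a₂..b₂, A x y) + ∫ x in a₁..b₁, ∫ y in a₂..b₂, B x y := by
  rw [← integral_add hA.intervalIntegral_of_prod.intervalIntegrable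
    hB.intervalIntegral_of_prod.intervalIntegrable]
  exact integral_congr fun x hx => integral_add
    ((hA.uncurry_left x hx).intervalIntegrable) ((hB.uncurry_left x hx).intervalIntegrable)

theorem integral_integral_swap_of_continuousOn {A : ℝ → ℝ → ℝ}
    (hA : ContinuousOn (uncurry A) (uIcc a₁ b₁ ×ˢ uIcc a₂ b₂)) :
    ∫ x in a₁..b₁, ∫ y in a₂..b₂, A x y = ∫ y in a₂..b₂, ∫ x in a₁..b₁, A x y :=
  intervalIntegral_intervalIntegral_swap <|
    (hA.integrableOn_compact (isCompact_uIcc.prod isCompact_uIcc)).mono_set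
      (prod_mono uIoc_subset_uIcc uIoc_subset_uIcc)

variable {k : ℝ → ℝ → ℝ → ℝ}

theorem integral_integral_integral_swap_inner_of_continuousOn
    (hk : ContinuousOn (fun p : ℝ × ℝ × ℝ => k p.1 p.2.1 p.2.2)
      (uIcc a₁ b₁ ×ˢ uIcc a₂ b₂ ×ˢ uIcc a₃ b₃)) :
    ∫ x in a₁..b₁, ∫ y in a₂..b₂, ∫ z in a₃..b₃, k x y z
      = ∫ x in a₁..b₁, ∫ z in a₃..b₃, ∫ y in a₂..b₂, k x y z :=
  integral_congr fun x hx => integral_integral_swap_of_continuousOn <|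
    hk.comp (f := fun q : ℝ × ℝ => (x, q)) (by fun_prop) fun _ hq => ⟨hx, hq⟩

theorem integral_integral_integral_rotate_of_continuousOn
    (hk : ContinuousOn (fun p : ℝ × ℝ × ℝ => k p.1 p.2.1 p.2.2)
      (uIcc a₁ b₁ ×ˢ uIcc a₂ b₂ ×ˢ uIcc a₃ b₃)) :
    ∫ x in a₁..b₁, ∫ y in a₂..b₂, ∫ z in a₃..b₃, k x y z
      = ∫ z in a₃..b₃, ∫ x in a₁..b₁, ∫ y in a₂..b₂, k x y z := by
  rw [integral_integral_integral_swap_inner_of_continuousOn hk]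
  refine integral_integral_swap_of_continuousOn (A := fun x z => ∫ y in a₂..b₂, k x y z) ?_
  exact ContinuousOn.intervalIntegral_of_prod (h := fun (q : ℝ × ℝ) y => k q.1 y q.2)
    (s := uIcc a₁ b₁ ×ˢ uIcc a₃ b₃) <|
    hk.comp (f := fun q : (ℝ × ℝ) × ℝ => (q.1.1, q.2, q.1.2)) (by fun_prop)
      fun _ hq => ⟨hq.1.1, hq.2, hq.1.2⟩

theorem ContinuousOn.intervalIntegral_lastCoord {A B : Set ℝ}
    (hk : ContinuousOn (fun p : ℝ × ℝ × ℝ => k p.1 p.2.1 p.2.2) (A ×ˢ B ×ˢ uIcc a₃ b₃)) :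
    ContinuousOn (uncurry fun x y => ∫ z in a₃..b₃, k x y z) (A ×ˢ B) :=
  ContinuousOn.intervalIntegral_of_prod (h := fun (q : ℝ × ℝ) z => k q.1 q.2 z) <|
    hk.comp (f := fun q : (ℝ × ℝ) × ℝ => (q.1.1, q.1.2, q.2)) (by fun_prop)
      fun _ hq => ⟨hq.1.1, hq.1.2, hq.2⟩

end IteratedIntegral

section OppositeFaces

variable {f : ℝ → ℝ → ℝ → ℝ} {U : Set (ℝ × ℝ × ℝ)}

theorem hasDerivAt_lastCoord {p : ℝ × ℝ × ℝ}
    (hf : DifferentiableAt ℝ (fun q : ℝ × ℝ × ℝ => f q.1 q.2.1 q.2.2) p) :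
    HasDerivAt (fun r => f p.1 p.2.1 r)
      (fderiv ℝ (fun q : ℝ × ℝ × ℝ => f q.1 q.2.1 q.2.2) p (0, 0, 1)) p.2.2 :=
  hf.hasFDerivAt.comp_hasDerivAt (f := fun r => (p.1, p.2.1, r)) p.2.2
    ((hasDerivAt_const _ _).prodMk ((hasDerivAt_const _ _).prodMk (hasDerivAt_id _)))

theorem ContDiffOn.continuousOn_deriv_lastCoord (hU : IsOpen U)
    (hf : ContDiffOn ℝ 1 (fun p : ℝ × ℝ × ℝ => f p.1 p.2.1 p.2.2) U) :
    ContinuousOn (fun p : ℝ × ℝ × ℝ => deriv (fun r => f p.1 p.2.1 r) p.2.2) U :=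
  ((hf.continuousOn_fderiv_of_isOpen hU le_rfl).clm_apply continuousOn_const).congr fun _ hp =>
    (hasDerivAt_lastCoord
      ((hf.differentiableOn one_ne_zero).differentiableAt (hU.mem_nhds hp))).deriv

variable {x0 x1 y0 y1 z0 z1 : ℝ}

theorem opposite_faces_integral_eq_z (hU : IsOpen U) (hz : z0 ≠ z1)
    (hTU : uIcc x0 x1 ×ˢ uIcc y0 y1 ×ˢ uIcc z0 z1 ⊆ U)
    (hf : ContDiffOn ℝ 1 (fun p : ℝ × ℝ × ℝ => f p.1 p.2.1 p.2.2) U) :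
    (∫ x in x0..x1, ∫ y in y0..y1, f x y z0) + (∫ x in x0..x1, ∫ y in y0..y1, f x y z1)
      = 2 / (z1 - z0) * ((∫ x in x0..x1, ∫ y in y0..y1, ∫ z in z0..z1, f x y z)
        + ∫ x in x0..x1, ∫ y in y0..y1, ∫ z in z0..z1,
            deriv (fun r => f x y r) z * (z - (z0 + z1) / 2)) := by
  have hF := hf.continuousOn.mono hTU
  have hD := (hf.continuousOn_deriv_lastCoord hU).mono hTU
  have hface : ∀ z ∈ uIcc z0 z1,
      ContinuousOn (uncurry fun x y => f x y z) (uIcc x0 x1 ×ˢ uIcc y0 y1) := fun z hz =>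
    hF.comp (f := fun q : ℝ × ℝ => (q.1, q.2, z)) (by fun_prop) fun _ hq => ⟨hq.1, hq.2, hz⟩
  have hslice : ∀ x ∈ uIcc x0 x1, ∀ y ∈ uIcc y0 y1,
      f x y z0 + f x y z1 = 2 / (z1 - z0) * ((∫ z in z0..z1, f x y z)
        + ∫ z in z0..z1, deriv (fun r => f x y r) z * (z - (z0 + z1) / 2)) := fun x hx y hy =>
    add_eq_two_div_mul_integral_add_integral_deriv_mul hz
      (fun z hz => (hasDerivAt_lastCoord (p := (x, y, z))
        ((hf.differentiableOn one_ne_zero).differentiableAt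
          (hU.mem_nhds (hTU ⟨hx, hy, hz⟩)))).differentiableAt.hasDerivAt)
      (hD.comp (f := fun z => (x, y, z)) (by fun_prop) fun _ hz => ⟨hx, hy, hz⟩)
  calc _ = ∫ x in x0..x1, ∫ y in y0..y1, (f x y z0 + f x y z1) :=
        (integral_integral_add_of_continuousOn (hface z0 left_mem_uIcc)
          (hface z1 right_mem_uIcc)).symm
    _ = ∫ x in x0..x1, ∫ y in y0..y1, 2 / (z1 - z0) * ((∫ z in z0..z1, f x y z)
          + ∫ z in z0..z1, deriv (fun r => f x y r) z * (z - (z0 + z1) / 2)) :=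
        integral_congr fun x hx => integral_congr fun y hy => hslice x hx y hy
    _ = _ := by
        simp_rw [intervalIntegral.integral_const_mul]
        rw [integral_integral_add_of_continuousOn hF.intervalIntegral_lastCoord
          (hD.mul (by fun_prop)).intervalIntegral_lastCoord]

theorem opposite_faces_integral_eq_y (hU : IsOpen U) (hy : y0 ≠ y1)
    (hTU : uIcc x0 x1 ×ˢ uIcc y0 y1 ×ˢ uIcc z0 z1 ⊆ U)
    (hf : ContDiffOn ℝ 1 (fun p : ℝ × ℝ × ℝ => f p.1 p.2.1 p.2.2) U) :
    (∫ x in x0..x1, ∫ z in z0..z1, f x y0 z) + (∫ x in x0..x1, ∫ z in z0..z1, f x y1 z)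
      = 2 / (y1 - y0) * ((∫ x in x0..x1, ∫ y in y0..y1, ∫ z in z0..z1, f x y z)
        + ∫ x in x0..x1, ∫ y in y0..y1, ∫ z in z0..z1,
            deriv (fun s => f x s z) y * (y - (y0 + y1) / 2)) := by
  let σ : ℝ × ℝ × ℝ → ℝ × ℝ × ℝ := fun p => (p.1, p.2.2, p.2.1)
  have hσU : IsOpen (σ ⁻¹' U) := hU.preimage (by fun_prop)
  have hTσU : uIcc x0 x1 ×ˢ uIcc z0 z1 ×ˢ uIcc y0 y1 ⊆ σ ⁻¹' U :=
    fun _ hp => hTU ⟨hp.1, hp.2.2, hp.2.1⟩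
  have hfσ : ContDiffOn ℝ 1 (fun p : ℝ × ℝ × ℝ => f p.1 p.2.2 p.2.1) (σ ⁻¹' U) :=
    hf.comp (by fun_prop : ContDiff ℝ 1 σ).contDiffOn (mapsTo_preimage σ U)
  have h := opposite_faces_integral_eq_z (f := fun x z y => f x y z) hσU hy hTσU hfσ
  have hD : ContinuousOn (fun p : ℝ × ℝ × ℝ =>
      deriv (fun s => f p.1 s p.2.1) p.2.2 * (p.2.2 - (y0 + y1) / 2)) _ :=
    ((hfσ.continuousOn_deriv_lastCoord (f := fun x z y => f x y z) hσU).mono hTσU).mul (by fun_prop)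
  rwa [integral_integral_integral_swap_inner_of_continuousOn (k := fun x z y => f x y z)
      (hfσ.continuousOn.mono hTσU),
    integral_integral_integral_swap_inner_of_continuousOn
      (k := fun x z y => deriv (fun s => f x s z) y * (y - (y0 + y1) / 2)) hD] at h

theorem opposite_faces_integral_eq_x (hU : IsOpen U) (hx : x0 ≠ x1)
    (hTU : uIcc x0 x1 ×ˢ uIcc y0 y1 ×ˢ uIcc z0 z1 ⊆ U)
    (hf : ContDiffOn ℝ 1 (fun p : ℝ × ℝ × ℝ => f p.1 p.2.1 p.2.2) U) :
    (∫ y in y0..y1, ∫ z in z0..z1, f x0 y z) + (∫ y in y0..y1, ∫ z in z0..z1, f x1 y z)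
      = 2 / (x1 - x0) * ((∫ x in x0..x1, ∫ y in y0..y1, ∫ z in z0..z1, f x y z)
        + ∫ x in x0..x1, ∫ y in y0..y1, ∫ z in z0..z1,
            deriv (fun t => f t y z) x * (x - (x0 + x1) / 2)) := by
  let σ : ℝ × ℝ × ℝ → ℝ × ℝ × ℝ := fun p => (p.2.2, p.1, p.2.1)
  have hσU : IsOpen (σ ⁻¹' U) := hU.preimage (by fun_prop)
  have hTσU : uIcc y0 y1 ×ˢ uIcc z0 z1 ×ˢ uIcc x0 x1 ⊆ σ ⁻¹' U :=
    fun _ hp => hTU ⟨hp.2.2, hp.1, hp.2.1⟩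
  have hfσ : ContDiffOn ℝ 1 (fun p : ℝ × ℝ × ℝ => f p.2.2 p.1 p.2.1) (σ ⁻¹' U) :=
    hf.comp (by fun_prop : ContDiff ℝ 1 σ).contDiffOn (mapsTo_preimage σ U)
  have h := opposite_faces_integral_eq_z (f := fun y z x => f x y z) hσU hx hTσU hfσ
  have hD : ContinuousOn (fun p : ℝ × ℝ × ℝ =>
      deriv (fun t => f t p.1 p.2.1) p.2.2 * (p.2.2 - (x0 + x1) / 2)) _ :=
    ((hfσ.continuousOn_deriv_lastCoord (f := fun y z x => f x y z) hσU).mono hTσU).mul (by fun_prop)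
  rwa [integral_integral_integral_rotate_of_continuousOn (k := fun y z x => f x y z)
      (hfσ.continuousOn.mono hTσU),
    integral_integral_integral_rotate_of_continuousOn
      (k := fun y z x => deriv (fun t => f t y z) x * (x - (x0 + x1) / 2)) hD] at h

end OppositeFaces

theorem stmt14 (x0 x1 y0 y1 z0 z1 : ℝ) (hx : x0 < x1) (hy : y0 < y1) (hz : z0 < z1)
    (ex ey ez xc yc zc : ℝ)
    (hex : ex = x1 - x0) (hey : ey = y1 - y0) (hez : ez = z1 - z0)
    (hxc : xc = (x0 + x1) / 2) (hyc : yc = (y0 + y1) / 2) (hzc : zc = (z0 + z1) / 2)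
    -- `f` is continuously differentiable on a neighborhood `U` of `T`
    (f : ℝ → ℝ → ℝ → ℝ) (U : Set (ℝ × ℝ × ℝ)) (hU : IsOpen U)
    (hTU : Set.Icc x0 x1 ×ˢ Set.Icc y0 y1 ×ˢ Set.Icc z0 z1 ⊆ U)
    (hf : ContDiffOn ℝ 1 (fun p : ℝ × ℝ × ℝ => f p.1 p.2.1 p.2.2) U) :
    ((∫ x in x0..x1, ∫ z in z0..z1, f x y0 z) + (∫ x in x0..x1, ∫ z in z0..z1, f x y1 z)
      = 2 / ey * ((∫ x in x0..x1, ∫ y in y0..y1, ∫ z in z0..z1, f x y z)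
        + (∫ x in x0..x1, ∫ y in y0..y1, ∫ z in z0..z1,
            deriv (fun s => f x s z) y * (y - yc)))) ∧
    ((∫ y in y0..y1, ∫ z in z0..z1, f x0 y z) + (∫ y in y0..y1, ∫ z in z0..z1, f x1 y z)
      = 2 / ex * ((∫ x in x0..x1, ∫ y in y0..y1, ∫ z in z0..z1, f x y z)
        + (∫ x in x0..x1, ∫ y in y0..y1, ∫ z in z0..z1,
            deriv (fun t => f t y z) x * (x - xc)))) ∧
    ((∫ x in x0..x1, ∫ y in y0..y1, f x y z0) + (∫ x in x0..x1, ∫ y in y0..y1, f x y z1)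
      = 2 / ez * ((∫ x in x0..x1, ∫ y in y0..y1, ∫ z in z0..z1, f x y z)
        + (∫ x in x0..x1, ∫ y in y0..y1, ∫ z in z0..z1,
            deriv (fun r => f x y r) z * (z - zc)))) := by
  subst hex hey hez hxc hyc hzc
  rw [← uIcc_of_le hx.le, ← uIcc_of_le hy.le, ← uIcc_of_le hz.le] at hTU
  exact ⟨opposite_faces_integral_eq_y hU hy.ne hTU hf, opposite_faces_integral_eq_x hU hx.ne hTU hf,
    opposite_faces_integral_eq_z hU hz.ne hTU hf⟩
end
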